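/- Let γ^1,...,γ^n and β^1,...,β^n be two sets of elements of Cl(p,q) each satisfying the Clifford anticommutation relations with the same η. Define H(U) = (1/2^n) ∑_A β^A U (γ^A)^{-1}, the sum over all 2^n ordered multi-indices A. Then for every multi-index B, β^B H(U) = H(U) γ^B; in particular β^b H(U) = H(U) γ^b for all b = 1,...,n. -/

import Mathlib

/-- Ordered product `e^{a_1} ⋯ e^{a_k}` (`a_1 < ⋯ < a_k`) of generators over an
ordered multi-index, encoded as a finset of indices. For `s = ∅` this is `1 = e`. -/
def cliffProd {n : ℕ} {A : Type*} [Ring A] (e : Fin n → A) (s : Finset (Fin n)) : A :=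
  ((s.sort (· ≤ ·)).map e).prod

/-- The entries of the diagonal matrix `η = diag(1,…,1,−1,…,−1)` with `p` entries `+1`
followed by `q = n - p` entries `−1`. -/
def eta (p : ℕ) {n : ℕ} (a b : Fin n) : ℤ :=
  if a = b then (if (a : ℕ) < p then 1 else -1) else 0

/-- The generalized Reynolds operator `H(U) = 2⁻ⁿ ∑_A β^A U (γ^A)⁻¹`. -/
noncomputable def genH (F : Type*) [RCLike F] {n : ℕ} {A : Type*} [Ring A] [Algebra F A]
    (β γ : Fin n → A) (U : A) : A :=
  ((2 : F) ^ n)⁻¹ • ∑ s : Finset (Fin n), cliffProd β s * U * Ring.inverse (cliffProd γ s)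

/-!
Every product `e^t e^s` of ordered monomials equals `c • e^(t ∆ s)` for an integer `c`
obtained by commuting generators past each other and squaring them, so `c` depends only
on `η`, `t` and `s`, not on the family `e`. Hence `β^B β^A = c • β^(B ∆ A)` and
`γ^B γ^A = c • γ^(B ∆ A)` with the same `c`, which gives
`β^B (β^A U (γ^A)⁻¹) = β^(B ∆ A) U (γ^(B ∆ A))⁻¹ γ^B`; summing over `A` and reindexing by the
involution `A ↦ B ∆ A` yields `β^B H(U) = H(U) γ^B`.
-/

open Finset

lemma Finset.insert_eq_symmDiff_singleton {α : Type*} [DecidableEq α] {a : α} {s : Finset α}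
    (h : a ∉ s) : insert a s = symmDiff s {a} := by
  rw [(disjoint_singleton_right.2 h).symmDiff_eq_sup, sup_eq_union, union_comm, insert_eq]

section CliffordProducts

variable {n : ℕ} {A : Type*} [Ring A]

def IsCliffordFamily (p : ℕ) (e : Fin n → A) : Prop :=
  ∀ a b : Fin n, e a * e b + e b * e a = ((2 * eta p a b : ℤ) : A)

/-- The sign in `e a * e^s = cliffSign p a s • e^(s ∆ {a})`: `e a` passes the generators of `s`
below `a`, then either squares to `η_aa` or takes its place. -/
def cliffSign (p : ℕ) (a : Fin n) (s : Finset (Fin n)) : ℤ :=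
  (-1) ^ #{b ∈ s | b < a} * if a ∈ s then eta p a a else 1

lemma isUnit_eta_self (p : ℕ) (a : Fin n) : IsUnit (eta p a a) := by
  rw [eta, if_pos rfl]
  split_ifs <;> simp

lemma cliffProd_empty (e : Fin n → A) : cliffProd e ∅ = 1 := by
  simp [cliffProd]

lemma cliffProd_singleton (e : Fin n → A) (a : Fin n) : cliffProd e {a} = e a := by
  simp [cliffProd]

lemma cliffProd_insert_of_lt (e : Fin n → A) {a : Fin n} {s : Finset (Fin n)}
    (h : ∀ b ∈ s, a < b) : cliffProd e (insert a s) = e a * cliffProd e s := by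
  rw [cliffProd, sort_insert _ (fun b hb => (h b hb).le) fun ha => (h a ha).false]
  simp [cliffProd]

lemma isUnit_cliffProd {e : Fin n → A} (he : ∀ a, IsUnit (e a)) (s : Finset (Fin n)) :
    IsUnit (cliffProd e s) :=
  List.prod_isUnit fun _ hx => by
    obtain ⟨a, -, rfl⟩ := List.mem_map.1 hx
    exact he a

section cliffSign

variable {p : ℕ} {a : Fin n} {s : Finset (Fin n)}

lemma cliffSign_of_forall_lt (h : ∀ b ∈ s, a < b) : cliffSign p a s = 1 := by
  have hfilter : {b ∈ s | b < a} = ∅ :=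
    filter_eq_empty_iff.2 fun b hb => (h b hb).asymm
  have ha : a ∉ s := fun ha => (h a ha).false
  simp [cliffSign, hfilter, ha]

lemma cliffSign_insert_self (h : ∀ b ∈ s, a < b) : cliffSign p a (insert a s) = eta p a a := by
  have hfilter : {b ∈ insert a s | b < a} = ∅ :=
    filter_eq_empty_iff.2 fun b hb => by
      rcases mem_insert.1 hb with rfl | hb
      · exact lt_irrefl b
      · exact (h b hb).asymm
  simp [cliffSign, hfilter]

lemma cliffSign_insert_of_lt {b : Fin n} (hba : b < a) (hb : b ∉ s) :
    cliffSign p a (insert b s) = -cliffSign p a s := by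
  have hfilter : {c ∈ insert b s | c < a} = insert b {c ∈ s | c < a} := by
    rw [filter_insert, if_pos hba]
  have hmem : a ∈ insert b s ↔ a ∈ s := by simp [hba.ne']
  rw [cliffSign, cliffSign, hfilter, card_insert_of_notMem fun h => hb (mem_filter.1 h).1,
    pow_succ, if_congr hmem rfl rfl]
  ring

end cliffSign

namespace IsCliffordFamily

variable {p : ℕ} {e : Fin n → A}

lemma mul_self (he : IsCliffordFamily p e) (h2 : IsUnit (2 : A)) (a : Fin n) :
    e a * e a = eta p a a := by
  apply h2.isRegular.left
  have h := he a a
  push_cast at h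
  simpa only [two_mul] using h

lemma mul_eq_neg_mul_of_ne (he : IsCliffordFamily p e) {a b : Fin n} (hab : a ≠ b) :
    e a * e b = -(e b * e a) := by
  have h := he a b
  simp only [eta, if_neg hab, mul_zero, Int.cast_zero] at h
  exact eq_neg_of_add_eq_zero_left h

lemma isUnit (he : IsCliffordFamily p e) (h2 : IsUnit (2 : A)) (a : Fin n) : IsUnit (e a) := by
  rw [← isUnit_pow_iff two_ne_zero, sq, he.mul_self h2]
  exact (isUnit_eta_self p a).map (Int.castRingHom A)

theorem mul_cliffProd (he : IsCliffordFamily p e) (h2 : IsUnit (2 : A)) (a : Fin n)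
    (s : Finset (Fin n)) :
    e a * cliffProd e s = cliffSign p a s • cliffProd e (symmDiff s {a}) := by
  induction s using Finset.induction_on_min with
  | empty =>
    rw [← bot_eq_empty, bot_symmDiff, bot_eq_empty]
    simp [cliffSign, cliffProd_empty, cliffProd_singleton]
  | insert b s hb ih =>
    have hbs : b ∉ s := fun h => (hb b h).false
    rcases lt_trichotomy a b with hab | rfl | hba
    · have hlt : ∀ c ∈ insert b s, a < c := by
        simpa [hab] using fun c hc => hab.trans (hb c hc)
      rw [cliffSign_of_forall_lt hlt, one_smul, ← insert_eq_symmDiff_singleton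
        fun h => (hlt a h).false, cliffProd_insert_of_lt e hlt]
    · rw [cliffProd_insert_of_lt e hb, ← mul_assoc, he.mul_self h2, cliffSign_insert_self hb,
        insert_eq_symmDiff_singleton hbs, symmDiff_symmDiff_cancel_right, zsmul_eq_mul]
    · have hb' : b ∉ symmDiff s {a} := by simp [mem_symmDiff, hbs, hba.ne]
      have hlt : ∀ c ∈ symmDiff s {a}, b < c := fun c hc => by
        rcases mem_symmDiff.1 hc with ⟨hc, -⟩ | ⟨hc, -⟩
        · exact hb c hc
        · exact (mem_singleton.1 hc) ▸ hba
      calc e a * cliffProd e (insert b s)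
          = -(e b * (e a * cliffProd e s)) := by
            rw [cliffProd_insert_of_lt e hb, ← mul_assoc, he.mul_eq_neg_mul_of_ne hba.ne',
              neg_mul, mul_assoc]
        _ = -cliffSign p a s • cliffProd e (insert b (symmDiff s {a})) := by
            rw [ih, mul_smul_comm, cliffProd_insert_of_lt e hlt, neg_smul]
        _ = cliffSign p a (insert b s) • cliffProd e (symmDiff (insert b s) {a}) := by
            rw [cliffSign_insert_of_lt hba hbs, insert_eq_symmDiff_singleton hb',
              insert_eq_symmDiff_singleton hbs, symmDiff_right_comm]

end IsCliffordFamily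

theorem exists_cliffProd_mul_cliffProd {p : ℕ} {β γ : Fin n → A} (hβ : IsCliffordFamily p β)
    (hγ : IsCliffordFamily p γ) (h2 : IsUnit (2 : A)) (t s : Finset (Fin n)) :
    ∃ c : ℤ, cliffProd β t * cliffProd β s = c • cliffProd β (symmDiff t s) ∧
      cliffProd γ t * cliffProd γ s = c • cliffProd γ (symmDiff t s) := by
  induction t using Finset.induction_on_min with
  | empty =>
    rw [← bot_eq_empty, bot_symmDiff, bot_eq_empty]
    exact ⟨1, by simp [cliffProd_empty]⟩
  | insert a t ha ih =>
    obtain ⟨c, hcβ, hcγ⟩ := ih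
    have hidx : symmDiff (symmDiff t s) {a} = symmDiff (insert a t) s := by
      rw [insert_eq_symmDiff_singleton fun h => (ha a h).false, symmDiff_right_comm]
    refine ⟨c * cliffSign p a (symmDiff t s), ?_, ?_⟩
    · rw [cliffProd_insert_of_lt β ha, mul_assoc, hcβ, mul_smul_comm, hβ.mul_cliffProd h2,
        smul_smul, hidx]
    · rw [cliffProd_insert_of_lt γ ha, mul_assoc, hcγ, mul_smul_comm, hγ.mul_cliffProd h2,
        smul_smul, hidx]

lemma mul_mul_inverse_eq {x x' y y' z z' : A} (U : A) (c : ℤ) (hx : x * x' = c • z)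
    (hy : y * y' = c • z') (hy' : IsUnit y') (hz' : IsUnit z') :
    x * (x' * U * Ring.inverse y') = z * U * Ring.inverse z' * y := by
  have hy_eq : y = c • z' * Ring.inverse y' := by
    rw [← hy, Ring.mul_inverse_cancel_right _ _ hy']
  rw [hy_eq, ← mul_assoc, ← mul_assoc, hx]
  simp only [smul_mul_assoc, mul_smul_comm, mul_assoc, Ring.inverse_mul_cancel_left _ _ hz']

theorem cliffProd_mul_genH (F : Type*) [RCLike F] [Algebra F A] {p : ℕ} {β γ : Fin n → A}
    (hβ : IsCliffordFamily p β) (hγ : IsCliffordFamily p γ) (h2 : IsUnit (2 : A)) (U : A)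
    (B : Finset (Fin n)) : cliffProd β B * genH F β γ U = genH F β γ U * cliffProd γ B := by
  rw [genH, mul_smul_comm, smul_mul_assoc, mul_sum, sum_mul]
  congr 1
  refine Fintype.sum_bijective (symmDiff B) (symmDiff_right_involutive B).bijective _ _
    fun s => ?_
  obtain ⟨c, hcβ, hcγ⟩ := exists_cliffProd_mul_cliffProd hβ hγ h2 B s
  exact mul_mul_inverse_eq U c hcβ hcγ (isUnit_cliffProd (hγ.isUnit h2) s)
    (isUnit_cliffProd (hγ.isUnit h2) _)

end CliffordProducts

theorem stmt10_general {F : Type*} [RCLike F] (p n : ℕ)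
    {A : Type*} [Ring A] [Algebra F A]
    (γ β : Fin n → A)
    (hγ : ∀ a b : Fin n, γ a * γ b + γ b * γ a = ((2 * eta p a b : ℤ) : A))
    (hβ : ∀ a b : Fin n, β a * β b + β b * β a = ((2 * eta p a b : ℤ) : A))
    (U : A) :
    (∀ s : Finset (Fin n),
      cliffProd β s * genH F β γ U = genH F β γ U * cliffProd γ s) ∧
    (∀ a : Fin n, β a * genH F β γ U = genH F β γ U * γ a) := by
  have h2 : IsUnit (2 : A) := by
    simpa only [map_ofNat] using (IsUnit.mk0 (2 : F) two_ne_zero).map (algebraMap F A)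
  have hB := cliffProd_mul_genH F hβ hγ h2 U
  exact ⟨hB, fun a => by simpa only [cliffProd_singleton] using hB {a}⟩

/-- Let `γ^a` and `β^a` be two sets of elements of `Cl(p,q)` satisfying the Clifford
relations with the same `η`, and `H(U) = 2⁻ⁿ ∑_A β^A U (γ^A)⁻¹`. Then for every
multi-index `B`, `β^B H(U) = H(U) γ^B`; in particular `β^b H(U) = H(U) γ^b` for all `b`. -/
theorem stmt10 {F : Type*} [RCLike F] (p q n : ℕ) (hn : n = p + q)
    {A : Type*} [Ring A] [Algebra F A]
    (e : Fin n → A)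
    (hrele : ∀ a b : Fin n, e a * e b + e b * e a = ((2 * eta p a b : ℤ) : A))
    (bE : Module.Basis (Finset (Fin n)) F A)
    (hbE : ∀ s, bE s = cliffProd e s)
    (γ β : Fin n → A)
    (hγ : ∀ a b : Fin n, γ a * γ b + γ b * γ a = ((2 * eta p a b : ℤ) : A))
    (hβ : ∀ a b : Fin n, β a * β b + β b * β a = ((2 * eta p a b : ℤ) : A))
    (U : A) :
    (∀ s : Finset (Fin n),
      cliffProd β s * genH F β γ U = genH F β γ U * cliffProd γ s) ∧
    (∀ a : Fin n, β a * genH F β γ U = genH F β γ U * γ a) :=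
  stmt10_general p n γ β hγ hβ U
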